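/- arXiv:2104.11594 — 3 statements merged into one kernel-verified Lean document; each statement's English description precedes it below -/
import Mathlib

section
/- If (X₁,…,Xₙ) has the same distribution as (F_{X₁}^{-1}(U),…,F_{Xₙ}^{-1}(U)) for U uniform on (0,1), then there exist a random variable Z and non-decreasing functions f₁,…,fₙ such that (X₁,…,Xₙ) has the same distribution as (f₁(Z),…,fₙ(Z)); conversely, if (X₁,…,Xₙ) =_d (f₁(Z),…,fₙ(Z)) for some random variable Z and non-decreasing functions fᵢ, then the joint cdf satisfies F_X(x) = min_i F_{X_i}(x_i) for all x. -/
open MeasureTheory ProbabilityTheory Real Set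
open scoped ENNReal

noncomputable section

def cdf' {Ω : Type*} [MeasurableSpace Ω] (μ : Measure Ω) (X : Ω → ℝ) (x : ℝ) : ℝ :=
  (μ {ω | X ω ≤ x}).toReal

def VaR {Ω : Type*} [MeasurableSpace Ω] (μ : Measure Ω) (X : Ω → ℝ) (p : ℝ) : ℝ :=
  sInf {x | p ≤ cdf' μ X x}

def CVaR {Ω : Type*} [MeasurableSpace Ω] (μ : Measure Ω) (X : Ω → ℝ) (p : ℝ) : ℝ :=
  (∫ ω in {ω | VaR μ X p < X ω}, X ω ∂μ) / (μ {ω | VaR μ X p < X ω}).toReal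

def CLVaR {Ω : Type*} [MeasurableSpace Ω] (μ : Measure Ω) (X : Ω → ℝ) (p : ℝ) : ℝ :=
  (∫ ω in {ω | X ω < VaR μ X p}, X ω ∂μ) / (μ {ω | X ω < VaR μ X p}).toReal

def qf (F : ℝ → ℝ) (p : ℝ) : ℝ := sInf {x | p ≤ F x}

def unif : Measure ℝ := volume.restrict (Set.Ioo 0 1)

lemma cdf'_mono {Ω : Type*} [MeasurableSpace Ω] (μ : Measure Ω) [IsProbabilityMeasure μ]
    (Y : Ω → ℝ) : Monotone (cdf' μ Y) := fun a b hab =>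
  ENNReal.toReal_mono (measure_ne_top μ _) (measure_mono fun ω hω => le_trans hω hab)

lemma cdf'_exists_ge {Ω : Type*} [MeasurableSpace Ω] (μ : Measure Ω)
    [IsProbabilityMeasure μ] {Y : Ω → ℝ} (hY : Measurable Y) {q : ℝ} (hq : q < 1) :
    ∃ x, q ≤ cdf' μ Y x := by
  by_contra hcon
  push_neg at hcon
  have hd : Directed (· ⊆ ·) (fun k : ℕ => {ω | Y ω ≤ (k : ℝ)}) := by
    apply Monotone.directed_le
    intro a b hab ω hω
    simp only [mem_setOf_eq] at hω ⊢
    have : (a : ℝ) ≤ (b : ℝ) := by exact_mod_cast hab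
    linarith
  have hU : (⋃ k : ℕ, {ω | Y ω ≤ (k : ℝ)}) = (univ : Set Ω) := by
    ext ω
    simp only [mem_iUnion, mem_univ, iff_true, mem_setOf_eq]
    exact exists_nat_ge (Y ω)
  have h1 : (1 : ℝ≥0∞) = ⨆ k : ℕ, μ {ω | Y ω ≤ (k : ℝ)} := by
    rw [← hd.measure_iUnion, hU, measure_univ]
  have h2 : (1 : ℝ≥0∞) ≤ ENNReal.ofReal q := by
    rw [h1]
    exact iSup_le fun k =>
      le_of_lt ((ENNReal.lt_ofReal_iff_toReal_lt (measure_ne_top μ _)).mpr (hcon _))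
  exact absurd (lt_of_le_of_lt h2 (ENNReal.ofReal_lt_one.mpr hq)) (lt_irrefl _)

lemma cdf'_bddBelow {Ω : Type*} [MeasurableSpace Ω] (μ : Measure Ω) [IsProbabilityMeasure μ]
    {Y : Ω → ℝ} (hY : Measurable Y) {p : ℝ} (hp : 0 < p) :
    BddBelow {x | p ≤ cdf' μ Y x} := by
  have hanti : Antitone (fun k : ℕ => {ω | Y ω ≤ -(k : ℝ)}) := by
    intro a b hab ω hω
    simp only [mem_setOf_eq] at hω ⊢
    have : (a : ℝ) ≤ (b : ℝ) := by exact_mod_cast hab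
    linarith
  have hI : (⋂ k : ℕ, {ω | Y ω ≤ -(k : ℝ)}) = (∅ : Set Ω) := by
    ext ω
    simp only [mem_iInter, mem_setOf_eq, mem_empty_iff_false, iff_false, not_forall]
    obtain ⟨k, hk⟩ := exists_nat_gt (-(Y ω))
    exact ⟨k, by simp only [not_le]; linarith⟩
  have h0 : (⨅ k : ℕ, μ {ω | Y ω ≤ -(k : ℝ)}) = 0 := by
    rw [← hanti.measure_iInter (fun k => (hY measurableSet_Iic).nullMeasurableSet)
      ⟨0, measure_ne_top μ _⟩, hI, measure_empty]
  have hlt : (⨅ k : ℕ, μ {ω | Y ω ≤ -(k : ℝ)}) < ENNReal.ofReal p := by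
    rw [h0]; exact ENNReal.ofReal_pos.mpr hp
  obtain ⟨k, hk⟩ := iInf_lt_iff.mp hlt
  refine ⟨-(k : ℝ), fun y hy => ?_⟩
  by_contra hlt'
  push_neg at hlt'
  have : cdf' μ Y y < p :=
    lt_of_le_of_lt (cdf'_mono μ Y (le_of_lt hlt')) (ENNReal.toReal_lt_of_lt_ofReal hk)
  exact absurd hy (not_le.mpr this)

theorem comonotonic_quantile_iff_monotone_functions {Ω : Type*} [MeasurableSpace Ω]
    (μ : Measure Ω) [IsProbabilityMeasure μ] {n : ℕ} [NeZero n]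
    (X : Ω → Fin n → ℝ) (hX : Measurable X) :
    ((Measure.map X μ
        = Measure.map (fun u => fun i => qf (cdf' μ (fun ω => X ω i)) u) unif) →
      ∃ (ν : Measure ℝ), IsProbabilityMeasure ν ∧
        ∃ f : Fin n → ℝ → ℝ, (∀ i, Monotone (f i)) ∧
          Measure.map X μ = Measure.map (fun z => fun i => f i z) ν)
    ∧ (∀ (ν : Measure ℝ), IsProbabilityMeasure ν →
        ∀ f : Fin n → ℝ → ℝ, (∀ i, Monotone (f i)) →
          Measure.map X μ = Measure.map (fun z => fun i => f i z) ν →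
          ∀ x : Fin n → ℝ,
            (μ {ω | ∀ i, X ω i ≤ x i}).toReal
              = ⨅ i, cdf' μ (fun ω => X ω i) (x i)) := by
  have hnen : Nonempty (Fin n) := ⟨⟨0, Nat.pos_of_ne_zero (NeZero.ne n)⟩⟩
  have hXi : ∀ i, Measurable (fun ω => X ω i) := fun i => (measurable_pi_apply i).comp hX
  have hunif : IsProbabilityMeasure unif := by
    constructor
    simp [unif, Real.volume_Ioo]
  constructor
  · -- forward direction
    intro h
    have hπ := Real.pi_pos
    set g₀ : ℝ → ℝ := fun z => 1 / 2 + arctan z / π with hg₀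
    have hg₀mem : ∀ z, g₀ z ∈ Ioo (0 : ℝ) 1 := by
      intro z
      have h1 := Real.neg_pi_div_two_lt_arctan z
      have h2 := Real.arctan_lt_pi_div_two z
      have hl : -(1 / 2 : ℝ) < arctan z / π := by
        rw [lt_div_iff₀ hπ]; nlinarith
      have hr : arctan z / π < 1 / 2 := by
        rw [div_lt_iff₀ hπ]; nlinarith
      constructor <;> simp only [hg₀] <;> linarith
    have hg₀mono : Monotone g₀ := by
      intro a b hab
      have h1 : arctan a ≤ arctan b := Real.arctan_strictMono.monotone hab
      have h2 : arctan a / π ≤ arctan b / π := by gcongr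
      simp only [hg₀]
      linarith
    set f : Fin n → ℝ → ℝ := fun i z => qf (cdf' μ (fun ω => X ω i)) (g₀ z) with hf
    have hmono : ∀ i, Monotone (f i) := by
      intro i a b hab
      apply csInf_le_csInf
      · exact cdf'_bddBelow μ (hXi i) (hg₀mem a).1
      · obtain ⟨x₀, hx₀⟩ := cdf'_exists_ge μ (hXi i) (hg₀mem b).2
        exact ⟨x₀, hx₀⟩
      · exact fun x hx => le_trans (hg₀mono hab) hx
    set L : ℝ → ℝ := fun u => Real.tan (π * (u - 1 / 2)) with hL
    have hLmeas : Measurable L := by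
      have ht : Measurable Real.tan := by
        have htan : Real.tan = fun x => Real.sin x / Real.cos x :=
          funext fun x => Real.tan_eq_sin_div_cos x
        rw [htan]
        exact Real.continuous_sin.measurable.div Real.continuous_cos.measurable
      exact ht.comp (measurable_const.mul (measurable_id.sub measurable_const))
    refine ⟨unif.map L, Measure.isProbabilityMeasure_map hLmeas.aemeasurable, f, hmono, ?_⟩
    have hhmeas : Measurable (fun z => fun i : Fin n => f i z) :=
      measurable_pi_lambda _ fun i => (hmono i).measurable
    rw [h, Measure.map_map hhmeas hLmeas]
    apply Measure.map_congr
    have hae : ∀ᵐ u ∂unif, u ∈ Ioo (0 : ℝ) 1 := ae_restrict_mem measurableSet_Ioo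
    filter_upwards [hae] with u hu
    have hLu : g₀ (L u) = u := by
      have h1 : -(π / 2) < π * (u - 1 / 2) := by nlinarith [hu.1]
      have h2 : π * (u - 1 / 2) < π / 2 := by nlinarith [hu.2]
      simp only [hg₀, hL, Real.arctan_tan h1 h2]
      field_simp
      ring
    funext i
    show qf (cdf' μ (fun ω => X ω i)) u = f i (L u)
    simp only [hf, hLu]
  · -- reverse direction
    intro ν hν f hmono hmap x
    set S : Fin n → Set ℝ := fun i => {z | f i z ≤ x i} with hS
    have hcomp : ∀ i j, S i ⊆ S j ∨ S j ⊆ S i := by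
      intro i j
      by_cases hij : S i ⊆ S j
      · exact Or.inl hij
      · right
        obtain ⟨a, hai, haj⟩ := not_subset.mp hij
        intro b hb
        rcases le_total b a with hba | hab
        · exact le_trans (hmono i hba) hai
        · exact absurd (le_trans (hmono j hab) hb) haj
    have key : ∀ s : Finset (Fin n), ∃ i₀, ∀ i ∈ s, S i₀ ⊆ S i := by
      intro s
      induction s using Finset.induction_on with
      | empty => exact ⟨Classical.arbitrary (Fin n), by simp⟩
      | @insert a s' ha ih =>
        obtain ⟨i₀, h₀⟩ := ih
        rcases hcomp a i₀ with hc | hc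
        · refine ⟨a, fun i hi => ?_⟩
          rcases Finset.mem_insert.mp hi with rfl | hi
          · exact subset_rfl
          · exact hc.trans (h₀ i hi)
        · refine ⟨i₀, fun i hi => ?_⟩
          rcases Finset.mem_insert.mp hi with rfl | hi
          · exact hc
          · exact h₀ i hi
    obtain ⟨i₀, hi₀'⟩ := key Finset.univ
    have hi₀ : ∀ i, S i₀ ⊆ S i := fun i => hi₀' i (Finset.mem_univ i)
    have hInter : (⋂ i, S i) = S i₀ :=
      subset_antisymm (iInter_subset _ _) (subset_iInter hi₀)
    have hg : Measurable (fun z => fun i : Fin n => f i z) :=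
      measurable_pi_lambda _ fun i => (hmono i).measurable
    have hset : MeasurableSet {y : Fin n → ℝ | ∀ i, y i ≤ x i} := by
      have hdes : {y : Fin n → ℝ | ∀ i, y i ≤ x i}
          = ⋂ i, (fun y : Fin n → ℝ => y i) ⁻¹' Iic (x i) := by
        ext y; simp [mem_iInter]
      rw [hdes]
      exact MeasurableSet.iInter fun i => (measurable_pi_apply i) measurableSet_Iic
    have e1 : μ {ω | ∀ i, X ω i ≤ x i} = ν (⋂ i, S i) := by
      have hc := congrArg (fun m : Measure (Fin n → ℝ) => m {y | ∀ i, y i ≤ x i}) hmap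
      rw [Measure.map_apply hX hset, Measure.map_apply hg hset] at hc
      have hp1 : X ⁻¹' {y : Fin n → ℝ | ∀ i, y i ≤ x i} = {ω | ∀ i, X ω i ≤ x i} := rfl
      have hp2 : (fun z => fun i : Fin n => f i z) ⁻¹' {y | ∀ i, y i ≤ x i}
          = ⋂ i, S i := by
        ext z; simp [hS, mem_iInter]
      rw [hp1, hp2] at hc
      exact hc
    have e2 : ∀ i, μ {ω | X ω i ≤ x i} = ν (S i) := by
      intro i
      have hsi : MeasurableSet {y : Fin n → ℝ | y i ≤ x i} :=
        (measurable_pi_apply i) measurableSet_Iic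
      have hc := congrArg (fun m : Measure (Fin n → ℝ) => m {y | y i ≤ x i}) hmap
      rw [Measure.map_apply hX hsi, Measure.map_apply hg hsi] at hc
      exact hc
    have ecdf : ∀ i, cdf' μ (fun ω => X ω i) (x i) = (ν (S i)).toReal := by
      intro i
      simp only [cdf']
      rw [e2 i]
    have hle : ∀ i, (ν (S i₀)).toReal ≤ (ν (S i)).toReal := fun i =>
      ENNReal.toReal_mono (measure_ne_top ν _) (measure_mono (hi₀ i))
    rw [e1, hInter]
    apply le_antisymm
    · apply le_ciInf
      intro i
      rw [ecdf i]
      exact hle i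
    · have hbd : BddBelow (range fun i => cdf' μ (fun ω => X ω i) (x i)) :=
        (Set.finite_range _).bddBelow
      calc (⨅ i, cdf' μ (fun ω => X ω i) (x i)) ≤ cdf' μ (fun ω => X ω i₀) (x i₀) :=
            ciInf_le hbd i₀
        _ = (ν (S i₀)).toReal := ecdf i₀
end
end

section
/- For any integrable random vector (X₁,…,Xₙ) with marginal cdfs F_{X₁},…,F_{Xₙ}, and U uniformly distributed on (0,1), the sum satisfies Σⱼ Xⱼ ≤_cx Σⱼ F_{Xⱼ}^{-1}(U), i.e., the comonotonic sum is an upper bound in convex order. -/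
open MeasureTheory ProbabilityTheory Real Set Filter Topology

noncomputable section

section
set_option linter.unusedSectionVars false

instance : IsProbabilityMeasure unif := by
  constructor
  rw [unif, Measure.restrict_apply_univ, Real.volume_Ioo]
  norm_num

variable (ν : Measure ℝ) [IsProbabilityMeasure ν]

lemma qf_nonempty {u : ℝ} (hu1 : u < 1) : {x | u ≤ cdf ν x}.Nonempty := by
  obtain ⟨y, hy⟩ := ((tendsto_cdf_atTop ν).eventually (eventually_ge_nhds hu1)).exists
  exact ⟨y, hy⟩

lemma qf_bddBelow {u : ℝ} (hu0 : 0 < u) : BddBelow {x | u ≤ cdf ν x} := by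
  obtain ⟨y, hy⟩ := (eventually_atBot.mp ((tendsto_cdf_atBot ν).eventually (eventually_lt_nhds hu0)))
  refine ⟨y, fun x hx => ?_⟩
  by_contra hxy
  exact absurd hx (not_le.mpr (hy x (le_of_not_ge hxy)))

lemma qf_le_iff {u : ℝ} (hu0 : 0 < u) (hu1 : u < 1) (x : ℝ) :
    qf (cdf ν) u ≤ x ↔ u ≤ cdf ν x := by
  constructor
  · intro h
    have h2 : ∀ z, x < z → u ≤ cdf ν z := by
      intro z hz
      obtain ⟨y, hy, hyz⟩ := exists_lt_of_csInf_lt (qf_nonempty ν hu1) (lt_of_le_of_lt h hz)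
      exact hy.trans (monotone_cdf ν hyz.le)
    have hrc : Tendsto (cdf ν) (𝓝[>] x) (𝓝 (cdf ν x)) :=
      ((cdf ν).right_continuous x).mono_left (nhdsWithin_mono x Ioi_subset_Ici_self)
    exact ge_of_tendsto hrc (eventually_nhdsWithin_of_forall fun z hz => h2 z hz)
  · intro h
    exact csInf_le (qf_bddBelow ν hu0) h

lemma qf_monotoneOn : MonotoneOn (qf (cdf ν)) (Ioo 0 1) := by
  intro p hp q hq hpq
  exact csInf_le_csInf (qf_bddBelow ν hp.1) (qf_nonempty ν hq.2)
    (fun x hx => le_trans hpq hx)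

/-- measurable global version of qf agreeing with it on `Ioo 0 1`. -/
def qfg (ν : Measure ℝ) : ℝ → ℝ := fun u => if u ∈ Ioo (0:ℝ) 1 then qf (cdf ν) u else 0

lemma qfg_measurable : Measurable (qfg ν) := by
  apply measurable_of_Iic
  intro x
  have : qfg ν ⁻¹' Iic x =
      (Ioo (0:ℝ) 1 ∩ Iic (cdf ν x)) ∪ (if 0 ≤ x then (Ioo (0:ℝ) 1)ᶜ else ∅) := by
    ext u
    by_cases hu : u ∈ Ioo (0:ℝ) 1
    · simp only [mem_preimage, mem_Iic, qfg, if_pos hu, mem_union, mem_inter_iff]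
      rw [qf_le_iff ν hu.1 hu.2 x]
      constructor
      · intro h; exact Or.inl ⟨hu, h⟩
      · rintro (⟨_, h⟩ | h)
        · exact h
        · exfalso
          split at h
          · exact h hu
          · exact h
    · simp only [mem_preimage, mem_Iic, qfg, if_neg hu, mem_union, mem_inter_iff]
      constructor
      · intro h
        right
        rw [if_pos h]
        exact hu
      · rintro (⟨h, _⟩ | h)
        · exact absurd h hu
        · split at h
          · next h0 => exact h0
          · exact absurd h (notMem_empty u)
  rw [this]
  refine (measurableSet_Ioo.inter measurableSet_Iic).union ?_
  split
  · exact measurableSet_Ioo.compl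
  · exact MeasurableSet.empty

lemma qf_ae_eq_qfg : qf (cdf ν) =ᵐ[unif] qfg ν := by
  filter_upwards [ae_restrict_mem (measurableSet_Ioo : MeasurableSet (Ioo (0:ℝ) 1))] with u hu
  simp [qfg, hu]

lemma qf_aemeasurable : AEMeasurable (qf (cdf ν)) unif :=
  ⟨qfg ν, qfg_measurable ν, (qf_ae_eq_qfg ν)⟩

lemma map_qf : unif.map (qf (cdf ν)) = ν := by
  rw [Measure.map_congr (qf_ae_eq_qfg ν)]
  refine Measure.ext_of_Iic _ _ fun x => ?_
  rw [Measure.map_apply (qfg_measurable ν) measurableSet_Iic]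
  have hpre : qfg ν ⁻¹' Iic x ∩ Ioo (0:ℝ) 1 = Ioo (0:ℝ) 1 ∩ Iic (cdf ν x) := by
    ext u
    simp only [mem_inter_iff, mem_preimage, mem_Iic, qfg]
    constructor
    · rintro ⟨h, hu⟩
      rw [if_pos hu] at h
      exact ⟨hu, (qf_le_iff ν hu.1 hu.2 x).mp h⟩
    · rintro ⟨hu, h⟩
      rw [if_pos hu]
      exact ⟨(qf_le_iff ν hu.1 hu.2 x).mpr h, hu⟩
  rw [unif, Measure.restrict_apply (qfg_measurable ν measurableSet_Iic), hpre]
  rw [← ofReal_cdf ν x]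
  rcases lt_or_ge (cdf ν x) 1 with h1 | h1
  · have : Ioo (0:ℝ) 1 ∩ Iic (cdf ν x) = Ioc 0 (cdf ν x) := by
      ext u
      simp only [mem_inter_iff, mem_Ioo, mem_Iic, mem_Ioc]
      constructor
      · rintro ⟨⟨h0, _⟩, hc⟩; exact ⟨h0, hc⟩
      · rintro ⟨h0, hc⟩; exact ⟨⟨h0, lt_of_le_of_lt hc h1⟩, hc⟩
    rw [this, Real.volume_Ioc, sub_zero]
  · have : cdf ν x = 1 := le_antisymm (cdf_le_one ν x) h1
    rw [this]
    have h2 : Ioo (0:ℝ) 1 ∩ Iic 1 = Ioo 0 1 := by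
      apply inter_eq_self_of_subset_left
      exact fun u hu => le_of_lt hu.2
    rw [h2, Real.volume_Ioo]
    norm_num

lemma integral_qf_comp (f : ℝ → ℝ) (hf : Measurable f) :
    ∫ u, f (qf (cdf ν) u) ∂unif = ∫ y, f y ∂ν := by
  have h := integral_map (qf_aemeasurable ν) hf.aestronglyMeasurable
  rw [map_qf ν] at h
  exact h.symm

lemma integrable_qf (hν : Integrable id ν) : Integrable (qf (cdf ν)) unif := by
  have h := (integrable_map_measure aestronglyMeasurable_id (qf_aemeasurable ν)).mp
    ((map_qf ν).symm ▸ hν)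
  exact h

end

section
open Filter Topology
set_option linter.unusedSectionVars false

lemma exists_gt_sum {n : ℕ} (hn : 0 < n) (Q : Fin n → ℝ → ℝ) (s : Set ℝ)
    (hs : s.Nonempty) (hmono : ∀ j, MonotoneOn (Q j) s) (hbdd : ∀ j, BddAbove (Q j '' s))
    (hmax : ∀ u ∈ s, ∀ v ∈ s, u ⊔ v ∈ s)
    {c : ℝ} (hc : c < ∑ j, sSup (Q j '' s)) : ∃ u ∈ s, c < ∑ j, Q j u := by
  set ε := ((∑ j, sSup (Q j '' s)) - c) / n with hε
  have hεpos : 0 < ε := div_pos (by linarith) (by exact_mod_cast hn)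
  have hsel : ∀ j, ∃ u ∈ s, sSup (Q j '' s) - ε < Q j u := by
    intro j
    obtain ⟨x, hx, hlt⟩ := exists_lt_of_lt_csSup (hs.image (Q j))
      (show sSup (Q j '' s) - ε < sSup (Q j '' s) by linarith)
    obtain ⟨u, hu, rfl⟩ := hx
    exact ⟨u, hu, hlt⟩
  choose U hU hQU using hsel
  haveI : Nonempty (Fin n) := Fin.pos_iff_nonempty.mp hn
  set u := Finset.univ.sup' Finset.univ_nonempty U with hu
  have hus : u ∈ s := Finset.sup'_mem s hmax Finset.univ Finset.univ_nonempty U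
    (fun j _ => hU j)
  refine ⟨u, hus, ?_⟩
  have h1 : ∀ j, sSup (Q j '' s) - ε < Q j u := fun j =>
    lt_of_lt_of_le (hQU j) (hmono j (hU j) hus (Finset.le_sup' U (Finset.mem_univ j)))
  have h2 : (∑ j, (sSup (Q j '' s) - ε)) < ∑ j, Q j u :=
    Finset.sum_lt_sum_of_nonempty Finset.univ_nonempty (fun j _ => h1 j)
  have h3 : (∑ j : Fin n, (sSup (Q j '' s) - ε)) = (∑ j, sSup (Q j '' s)) - n * ε := by
    rw [Finset.sum_sub_distrib, Finset.sum_const, Finset.card_univ, Fintype.card_fin,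
      nsmul_eq_mul]
  have h4 : (n : ℝ) * ε = (∑ j, sSup (Q j '' s)) - c := by
    rw [hε, mul_div_cancel₀]
    exact_mod_cast hn.ne'
  calc c = (∑ j, sSup (Q j '' s)) - n * ε := by rw [h4]; ring
    _ = ∑ j : Fin n, (sSup (Q j '' s) - ε) := h3.symm
    _ < ∑ j, Q j u := h2

lemma exists_lt_sum {n : ℕ} (hn : 0 < n) (Q : Fin n → ℝ → ℝ) (s : Set ℝ)
    (hs : s.Nonempty) (hmono : ∀ j, MonotoneOn (Q j) s) (hbdd : ∀ j, BddBelow (Q j '' s))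
    (hmin : ∀ u ∈ s, ∀ v ∈ s, u ⊓ v ∈ s)
    {c : ℝ} (hc : (∑ j, sInf (Q j '' s)) < c) : ∃ u ∈ s, (∑ j, Q j u) < c := by
  set ε := (c - ∑ j, sInf (Q j '' s)) / n with hε
  have hεpos : 0 < ε := div_pos (by linarith) (by exact_mod_cast hn)
  have hsel : ∀ j, ∃ u ∈ s, Q j u < sInf (Q j '' s) + ε := by
    intro j
    obtain ⟨x, hx, hlt⟩ := exists_lt_of_csInf_lt (hs.image (Q j))
      (show sInf (Q j '' s) < sInf (Q j '' s) + ε by linarith)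
    obtain ⟨u, hu, rfl⟩ := hx
    exact ⟨u, hu, hlt⟩
  choose U hU hQU using hsel
  haveI : Nonempty (Fin n) := Fin.pos_iff_nonempty.mp hn
  set u := Finset.univ.inf' Finset.univ_nonempty U with hu
  have hus : u ∈ s := Finset.inf'_mem s hmin Finset.univ Finset.univ_nonempty U
    (fun j _ => hU j)
  refine ⟨u, hus, ?_⟩
  have h1 : ∀ j, Q j u < sInf (Q j '' s) + ε := fun j =>
    lt_of_le_of_lt (hmono j hus (hU j) (Finset.inf'_le U (Finset.mem_univ j))) (hQU j)
  have h2 : (∑ j, Q j u) < ∑ j : Fin n, (sInf (Q j '' s) + ε) :=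
    Finset.sum_lt_sum_of_nonempty Finset.univ_nonempty (fun j _ => h1 j)
  have h3 : (∑ j : Fin n, (sInf (Q j '' s) + ε)) = (∑ j, sInf (Q j '' s)) + n * ε := by
    rw [Finset.sum_add_distrib, Finset.sum_const, Finset.card_univ, Fintype.card_fin,
      nsmul_eq_mul]
  have h4 : (n : ℝ) * ε = c - ∑ j, sInf (Q j '' s) := by
    rw [hε, mul_div_cancel₀]
    exact_mod_cast hn.ne'
  calc (∑ j, Q j u) < (∑ j, sInf (Q j '' s)) + n * ε := h3 ▸ h2
    _ = c := by rw [h4]; ring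

lemma half_mem : (1/2 : ℝ) ∈ Ioo (0:ℝ) 1 := by norm_num

lemma ae_unif_mem : ∀ᵐ u ∂unif, u ∈ Ioo (0:ℝ) 1 :=
  ae_restrict_mem measurableSet_Ioo

lemma ae_unif_ne (p : ℝ) : ∀ᵐ u ∂unif, u ≠ p := by
  rw [ae_iff]
  have h1 : {u : ℝ | ¬u ≠ p} = {p} := by ext u; simp
  rw [h1]
  refine le_antisymm ?_ (zero_le)
  calc unif {p} ≤ volume {p} := Measure.restrict_apply_le _ _
    _ = 0 := Real.volume_singleton

lemma exists_dj {n : ℕ} (hn : 0 < n) (Q : Fin n → ℝ → ℝ)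
    (hmono : ∀ j, MonotoneOn (Q j) (Ioo 0 1)) (d : ℝ) :
    ∃ dj : Fin n → ℝ, (∑ j, dj j) = d ∧
      ∀ᵐ u ∂unif, (∀ j, Q j u ≤ dj j) ∨ (∀ j, dj j ≤ Q j u) := by
  classical
  set A : Set ℝ := {p ∈ Ioo (0:ℝ) 1 | (∑ j, Q j p) ≤ d} with hA
  have hnR : (0:ℝ) < n := by exact_mod_cast hn
  by_cases hAne : A.Nonempty
  · by_cases hAfull : ∀ p ∈ Ioo (0:ℝ) 1, p ∈ A
    · -- case (c): T ≤ d everywhere; use upper bounds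
      have hTle : ∀ p ∈ Ioo (0:ℝ) 1, (∑ j, Q j p) ≤ d := fun p hp => (hAfull p hp).2
      have hbddA : ∀ j, BddAbove (Q j '' Ioo 0 1) := by
        intro j₀
        refine ⟨max (Q j₀ (1/2)) (d - ∑ j ∈ Finset.univ.erase j₀, Q j (1/2)), ?_⟩
        rintro x ⟨u, hu, rfl⟩
        rcases le_or_gt u (1/2) with h | h
        · exact le_max_of_le_left (hmono j₀ hu half_mem h)
        · refine le_max_of_le_right ?_
          have hsum : Q j₀ u + ∑ j ∈ Finset.univ.erase j₀, Q j u = ∑ j, Q j u :=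
            Finset.add_sum_erase Finset.univ (fun j => Q j u) (Finset.mem_univ j₀)
          have herase : (∑ j ∈ Finset.univ.erase j₀, Q j (1/2))
              ≤ ∑ j ∈ Finset.univ.erase j₀, Q j u :=
            Finset.sum_le_sum fun j _ => hmono j half_mem hu h.le
          have := hTle u hu
          linarith
      set J : Fin n → ℝ := fun j => sSup (Q j '' Ioo 0 1) with hJ
      have hJle : (∑ j, J j) ≤ d := by
        by_contra hlt
        obtain ⟨u, hu, hdu⟩ := exists_gt_sum hn Q (Ioo 0 1) (nonempty_Ioo.mpr one_pos)
          hmono hbddA (fun a ha b hb => ⟨lt_sup_of_lt_left ha.1, sup_lt_iff.mpr ⟨ha.2, hb.2⟩⟩)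
          (not_le.mp hlt)
        exact absurd (hTle u hu) (not_le.mpr hdu)
      refine ⟨fun j => J j + (d - ∑ i, J i) / n, ?_, ?_⟩
      · rw [Finset.sum_add_distrib, Finset.sum_const, Finset.card_univ, Fintype.card_fin,
          nsmul_eq_mul, mul_div_cancel₀ _ hnR.ne']
        ring
      · filter_upwards [ae_unif_mem] with u hu
        left
        intro j
        have h1 : Q j u ≤ J j := le_csSup (hbddA j) (mem_image_of_mem _ hu)
        have h2 : 0 ≤ (d - ∑ i, J i) / n := div_nonneg (by linarith) hnR.le
        linarith
    · -- case (b): A nonempty, not all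
      push_neg at hAfull
      obtain ⟨p₁, hp₁, hp₁A⟩ := hAfull
      have hp₁d : d < ∑ j, Q j p₁ := by
        by_contra h
        exact hp₁A ⟨hp₁, not_lt.mp h⟩
      have hbddAbove : BddAbove A := by
        refine ⟨p₁, fun a ha => ?_⟩
        by_contra hcon
        have : (∑ j, Q j p₁) ≤ ∑ j, Q j a :=
          Finset.sum_le_sum fun j _ => hmono j hp₁ ha.1 (le_of_not_ge hcon)
        exact absurd (ha.2) (not_le.mpr (lt_of_lt_of_le hp₁d this))
      set p := sSup A with hp
      obtain ⟨p₀, hp₀⟩ := id hAne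
      have hpmem : p ∈ Ioo (0:ℝ) 1 := by
        constructor
        · exact lt_of_lt_of_le hp₀.1.1 (le_csSup hbddAbove hp₀)
        · exact lt_of_le_of_lt (csSup_le ⟨p₀, hp₀⟩ fun a ha => by
            by_contra hcon
            have : (∑ j, Q j p₁) ≤ ∑ j, Q j a :=
              Finset.sum_le_sum fun j _ => hmono j hp₁ ha.1 (le_of_not_ge hcon)
            exact absurd ha.2 (not_le.mpr (lt_of_lt_of_le hp₁d this))) hp₁.2
      have hIooL : (Ioo (0:ℝ) p).Nonempty := nonempty_Ioo.mpr hpmem.1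
      have hIooR : (Ioo p 1).Nonempty := nonempty_Ioo.mpr hpmem.2
      have hsubL : Ioo (0:ℝ) p ⊆ Ioo (0:ℝ) 1 := Ioo_subset_Ioo le_rfl hpmem.2.le
      have hsubR : Ioo p 1 ⊆ Ioo (0:ℝ) 1 := Ioo_subset_Ioo hpmem.1.le le_rfl
      have hmidR : (p+1)/2 ∈ Ioo p 1 := ⟨by linarith [hpmem.2], by linarith [hpmem.2]⟩
      have hmidL : p/2 ∈ Ioo (0:ℝ) p := ⟨by linarith [hpmem.1], by linarith [hpmem.1]⟩
      have hbddL : ∀ j, BddAbove (Q j '' Ioo 0 p) := by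
        intro j
        refine ⟨Q j ((p+1)/2), ?_⟩
        rintro x ⟨u, hu, rfl⟩
        exact hmono j (hsubL hu) (hsubR hmidR) (by linarith [hu.2, hmidR.1])
      have hbddR : ∀ j, BddBelow (Q j '' Ioo p 1) := by
        intro j
        refine ⟨Q j (p/2), ?_⟩
        rintro x ⟨u, hu, rfl⟩
        exact hmono j (hsubL hmidL) (hsubR hu) (by linarith [hu.1, hmidL.2])
      set L : Fin n → ℝ := fun j => sSup (Q j '' Ioo 0 p) with hL
      set R : Fin n → ℝ := fun j => sInf (Q j '' Ioo p 1) with hR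
      have hQL : ∀ j, ∀ u ∈ Ioo (0:ℝ) p, Q j u ≤ L j := fun j u hu =>
        le_csSup (hbddL j) (mem_image_of_mem _ hu)
      have hQR : ∀ j, ∀ u ∈ Ioo p 1, R j ≤ Q j u := fun j u hu =>
        csInf_le (hbddR j) (mem_image_of_mem _ hu)
      have hLR : ∀ j, L j ≤ R j := by
        intro j
        refine csSup_le (hIooL.image _) ?_
        rintro x ⟨u, hu, rfl⟩
        refine le_csInf (hIooR.image _) ?_
        rintro y ⟨v, hv, rfl⟩
        exact hmono j (hsubL hu) (hsubR hv) (by linarith [hu.2, hv.1])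
      have hTleA : ∀ u ∈ Ioo (0:ℝ) p, (∑ j, Q j u) ≤ d := by
        intro u hu
        obtain ⟨a, haA, hua⟩ := exists_lt_of_lt_csSup hAne hu.2
        calc (∑ j, Q j u) ≤ ∑ j, Q j a :=
              Finset.sum_le_sum fun j _ => hmono j (hsubL hu) haA.1 hua.le
          _ ≤ d := haA.2
      have hsumL : (∑ j, L j) ≤ d := by
        by_contra hlt
        obtain ⟨u, hu, hdu⟩ := exists_gt_sum hn Q (Ioo 0 p) hIooL
          (fun j => (hmono j).mono hsubL) hbddL
          (fun a ha b hb => ⟨lt_sup_of_lt_left ha.1, sup_lt_iff.mpr ⟨ha.2, hb.2⟩⟩)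
          (not_le.mp hlt)
        exact absurd (hTleA u hu) (not_le.mpr hdu)
      have hsumR : d ≤ ∑ j, R j := by
        by_contra hlt
        obtain ⟨v, hv, hdv⟩ := exists_lt_sum hn Q (Ioo p 1) hIooR
          (fun j => (hmono j).mono hsubR) hbddR
          (fun a ha b hb => ⟨lt_inf_iff.mpr ⟨ha.1, hb.1⟩, inf_lt_of_left_lt ha.2⟩)
          (not_le.mp hlt)
        have hvA : v ∈ A := ⟨hsubR hv, hdv.le⟩
        exact absurd (le_csSup hbddAbove hvA) (not_le.mpr hv.1)
      set θ := (d - ∑ j, L j) / ((∑ j, R j) - ∑ j, L j) with hθ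
      have hθ0 : 0 ≤ θ := by
        rcases eq_or_lt_of_le (Finset.sum_le_sum fun j _ => hLR j :
            (∑ j, L j) ≤ ∑ j, R j) with h | h
        · rw [hθ, ← h, sub_self, div_zero]
        · exact div_nonneg (by linarith) (by linarith)
      have hθ1 : θ ≤ 1 := by
        rcases eq_or_lt_of_le (Finset.sum_le_sum fun j _ => hLR j :
            (∑ j, L j) ≤ ∑ j, R j) with h | h
        · rw [hθ, ← h, sub_self, div_zero]; norm_num
        · rw [hθ, div_le_one (by linarith)]; linarith
      refine ⟨fun j => L j + θ * (R j - L j), ?_, ?_⟩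
      · rw [Finset.sum_add_distrib, ← Finset.mul_sum, Finset.sum_sub_distrib]
        rcases eq_or_lt_of_le (Finset.sum_le_sum fun j _ => hLR j :
            (∑ j, L j) ≤ ∑ j, R j) with h | h
        · rw [← h, sub_self, mul_zero, add_zero]; linarith
        · rw [hθ, div_mul_cancel₀ _ (by linarith : (∑ j, R j) - (∑ j, L j) ≠ 0)]; ring
      · filter_upwards [ae_unif_mem, ae_unif_ne p] with u hu hup
        rcases lt_or_gt_of_ne hup with h | h
        · left
          intro j
          have h1 := hQL j u ⟨hu.1, h⟩
          have h2 : 0 ≤ θ * (R j - L j) := mul_nonneg hθ0 (by linarith [hLR j])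
          linarith
        · right
          intro j
          have h1 := hQR j u ⟨h, hu.2⟩
          nlinarith [hLR j, hθ0, hθ1]
  · -- case (a): A empty, d < T everywhere; use lower bounds
    have hTgt : ∀ p ∈ Ioo (0:ℝ) 1, d < ∑ j, Q j p := by
      intro p hp
      by_contra h
      exact hAne ⟨p, hp, not_lt.mp h⟩
    have hbddA : ∀ j, BddBelow (Q j '' Ioo 0 1) := by
      intro j₀
      refine ⟨min (Q j₀ (1/2)) (d - ∑ j ∈ Finset.univ.erase j₀, Q j (1/2)), ?_⟩
      rintro x ⟨u, hu, rfl⟩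
      rcases le_or_gt (1/2) u with h | h
      · exact le_trans (min_le_left _ _) (hmono j₀ half_mem hu h)
      · refine le_trans (min_le_right _ _) ?_
        have hsum : Q j₀ u + ∑ j ∈ Finset.univ.erase j₀, Q j u = ∑ j, Q j u :=
          Finset.add_sum_erase Finset.univ (fun j => Q j u) (Finset.mem_univ j₀)
        have herase : (∑ j ∈ Finset.univ.erase j₀, Q j u)
            ≤ ∑ j ∈ Finset.univ.erase j₀, Q j (1/2) :=
          Finset.sum_le_sum fun j _ => hmono j hu half_mem h.le
        have := hTgt u hu
        linarith
    set I : Fin n → ℝ := fun j => sInf (Q j '' Ioo 0 1) with hI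
    have hIle : d ≤ ∑ j, I j := by
      by_contra hlt
      obtain ⟨u, hu, hdu⟩ := exists_lt_sum hn Q (Ioo 0 1) (nonempty_Ioo.mpr one_pos)
        hmono hbddA
        (fun a ha b hb => ⟨lt_inf_iff.mpr ⟨ha.1, hb.1⟩, inf_lt_of_left_lt ha.2⟩)
        (not_le.mp hlt)
      exact absurd (hTgt u hu) (not_lt.mpr hdu.le)
    refine ⟨fun j => I j - ((∑ i, I i) - d) / n, ?_, ?_⟩
    · rw [Finset.sum_sub_distrib, Finset.sum_const, Finset.card_univ, Fintype.card_fin,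
        nsmul_eq_mul, mul_div_cancel₀ _ hnR.ne']
      ring
    · filter_upwards [ae_unif_mem] with u hu
      right
      intro j
      have h1 : I j ≤ Q j u := csInf_le (hbddA j) (mem_image_of_mem _ hu)
      have h2 : 0 ≤ ((∑ i, I i) - d) / n := div_nonneg (by linarith) hnR.le
      linarith

end

theorem comonotonic_sum_convex_order_upper {Ω : Type*} [MeasurableSpace Ω]
    (μ : Measure Ω) [IsProbabilityMeasure μ] {n : ℕ}
    (X : Fin n → Ω → ℝ) (hmeas : ∀ j, Measurable (X j))
    (hint : ∀ j, Integrable (X j) μ) :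
    (∫ ω, (∑ j, X j ω) ∂μ = ∫ u, (∑ j, qf (cdf' μ (X j)) u) ∂unif)
    ∧ ∀ d : ℝ,
        ∫ ω, max ((∑ j, X j ω) - d) 0 ∂μ
          ≤ ∫ u, max ((∑ j, qf (cdf' μ (X j)) u) - d) 0 ∂unif := by
  classical
  have hprob : ∀ j, IsProbabilityMeasure ((μ.map (X j) : Measure ℝ)) := fun j =>
    Measure.isProbabilityMeasure_map (hmeas j).aemeasurable
  have hcdf' : ∀ j, cdf' μ (X j) = (cdf (μ.map (X j)) : ℝ → ℝ) := by
    intro j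
    funext x
    rw [cdf', @cdf_eq_real (μ.map (X j)) (hprob j), measureReal_def,
      Measure.map_apply (hmeas j) measurableSet_Iic]
    rfl
  simp only [hcdf']
  have hTrans : ∀ (j : Fin n) (f : ℝ → ℝ), Measurable f →
      ∫ u, f (qf (cdf (μ.map (X j))) u) ∂unif = ∫ ω, f (X j ω) ∂μ := by
    intro j f hf
    rw [@integral_qf_comp (μ.map (X j)) (hprob j) f hf]
    exact integral_map (hmeas j).aemeasurable hf.aestronglyMeasurable
  have hQint : ∀ j, Integrable (qf (cdf (μ.map (X j)))) unif := by
    intro j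
    refine @integrable_qf (μ.map (X j)) (hprob j) ?_
    exact (integrable_map_measure aestronglyMeasurable_id (hmeas j).aemeasurable).mpr (hint j)
  constructor
  · rw [integral_finset_sum _ (fun j _ => hint j),
      integral_finset_sum _ (fun j _ => hQint j)]
    exact Finset.sum_congr rfl fun j _ => (hTrans j id measurable_id).symm
  intro d
  by_cases hn : n = 0
  · subst hn
    simp [integral_const]
  obtain ⟨dj, hdj_sum, hcoh⟩ := exists_dj (Nat.pos_of_ne_zero hn) _
    (fun j => @qf_monotoneOn (μ.map (X j)) (hprob j)) d
  have int1 : Integrable (fun ω => max ((∑ j, X j ω) - d) 0) μ :=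
    ((integrable_finset_sum _ (fun j _ => hint j)).sub (integrable_const d)).pos_part
  have int2 : Integrable (fun ω => ∑ j, max (X j ω - dj j) 0) μ :=
    integrable_finset_sum _ fun j _ => ((hint j).sub (integrable_const _)).pos_part
  have int3 : ∀ (c : ℝ) j, Integrable (fun u => max (qf (cdf (μ.map (X j))) u - c) 0) unif :=
    fun c j => ((hQint j).sub (integrable_const c)).pos_part
  have int4 : Integrable (fun u => ∑ j, max (qf (cdf (μ.map (X j))) u - dj j) 0) unif :=
    integrable_finset_sum _ fun j _ => int3 _ j
  have int5 : Integrable (fun u => max ((∑ j, qf (cdf (μ.map (X j))) u) - d) 0) unif :=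
    ((integrable_finset_sum _ fun j _ => hQint j).sub (integrable_const d)).pos_part
  calc ∫ ω, max ((∑ j, X j ω) - d) 0 ∂μ
      ≤ ∫ ω, ∑ j, max (X j ω - dj j) 0 ∂μ := by
        refine integral_mono int1 int2 fun ω => ?_
        refine max_le ?_ (Finset.sum_nonneg fun j _ => le_max_right _ _)
        rw [← hdj_sum, ← Finset.sum_sub_distrib]
        exact Finset.sum_le_sum fun j _ => le_max_left _ _
    _ = ∑ j, ∫ ω, max (X j ω - dj j) 0 ∂μ :=
        integral_finset_sum _ fun j _ => ((hint j).sub (integrable_const _)).pos_part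
    _ = ∑ j, ∫ u, max (qf (cdf (μ.map (X j))) u - dj j) 0 ∂unif :=
        Finset.sum_congr rfl fun j _ =>
          (hTrans j (fun y => max (y - dj j) 0)
            ((measurable_id.sub measurable_const).max measurable_const)).symm
    _ = ∫ u, ∑ j, max (qf (cdf (μ.map (X j))) u - dj j) 0 ∂unif :=
        (integral_finset_sum _ fun j _ => int3 _ j).symm
    _ ≤ ∫ u, max ((∑ j, qf (cdf (μ.map (X j))) u) - d) 0 ∂unif := by
        refine integral_mono_ae int4 int5 ?_
        filter_upwards [hcoh] with u hu
        rcases hu with h | h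
        · have hz : (∑ j, max (qf (cdf (μ.map (X j))) u - dj j) 0) = 0 :=
            Finset.sum_eq_zero fun j _ => max_eq_right (sub_nonpos.mpr (h j))
          rw [hz]
          exact le_max_right _ _
        · have hz : (∑ j, max (qf (cdf (μ.map (X j))) u - dj j) 0)
              = (∑ j, qf (cdf (μ.map (X j))) u) - d := by
            rw [Finset.sum_congr rfl fun j _ => max_eq_left (sub_nonneg.mpr (h j)),
              Finset.sum_sub_distrib, hdj_sum]
          rw [hz]
          exact le_max_left _ _
end
end

section
/- If X and Y are real-valued integrable random variables with X ≤_cx Y (convex order) and both have continuous strictly increasing cdfs, then for every p ∈ (0,1), CVaR_p(X) ≤ CVaR_p(Y), where CVaR_p(Z) = E(Z | Z > VaR_p(Z)). -/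
open MeasureTheory ProbabilityTheory Real Set

noncomputable section

section aux
variable {Ω : Type*} [MeasurableSpace Ω] (μ : Measure Ω) [IsProbabilityMeasure μ]
variable (Z : Ω → ℝ)

lemma cdf'_eq (hZ : Measurable Z) (x : ℝ) :
    cdf' μ Z x = ProbabilityTheory.cdf (μ.map Z) x := by
  have : IsProbabilityMeasure (μ.map Z) := Measure.isProbabilityMeasure_map hZ.aemeasurable
  rw [ProbabilityTheory.cdf_eq_real, measureReal_def, Measure.map_apply hZ measurableSet_Iic]
  rfl

lemma cdf'_tendsto_atTop (hZ : Measurable Z) :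
    Filter.Tendsto (cdf' μ Z) Filter.atTop (nhds 1) := by
  have : IsProbabilityMeasure (μ.map Z) := Measure.isProbabilityMeasure_map hZ.aemeasurable
  exact (tendsto_cdf_atTop (μ.map Z)).congr fun x => (cdf'_eq μ Z hZ x).symm

lemma cdf'_tendsto_atBot (hZ : Measurable Z) :
    Filter.Tendsto (cdf' μ Z) Filter.atBot (nhds 0) := by
  have : IsProbabilityMeasure (μ.map Z) := Measure.isProbabilityMeasure_map hZ.aemeasurable
  exact (tendsto_cdf_atBot (μ.map Z)).congr fun x => (cdf'_eq μ Z hZ x).symm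

/-- At the VaR, the cdf equals p. -/
lemma cdf'_VaR (hZ : Measurable Z) (hc : Continuous (cdf' μ Z)) (hs : StrictMono (cdf' μ Z))
    {p : ℝ} (hp : p ∈ Set.Ioo (0:ℝ) 1) : cdf' μ Z (VaR μ Z p) = p := by
  obtain ⟨hp0, hp1⟩ := hp
  obtain ⟨a, ha⟩ : ∃ a, cdf' μ Z a < p :=
    ((cdf'_tendsto_atBot μ Z hZ).eventually (eventually_lt_nhds hp0)).exists
  obtain ⟨b, hb⟩ : ∃ b, p < cdf' μ Z b :=
    ((cdf'_tendsto_atTop μ Z hZ).eventually (eventually_gt_nhds hp1)).exists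
  have hab : a ≤ b := by
    by_contra h
    push_neg at h
    have := hs h
    linarith
  obtain ⟨v, _, hFv⟩ := intermediate_value_Icc hab hc.continuousOn ⟨ha.le, hb.le⟩
  have hvS : v ∈ {x | p ≤ cdf' μ Z x} := by simp [hFv]
  have hlb : ∀ x ∈ {x | p ≤ cdf' μ Z x}, v ≤ x := by
    intro x hx
    by_contra h
    push_neg at h
    have := hs h
    rw [hFv] at this
    exact absurd hx (not_le.2 this)
  have hVaR : VaR μ Z p = v :=
    le_antisymm (csInf_le ⟨v, hlb⟩ hvS) (le_csInf ⟨v, hvS⟩ hlb)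
  rw [hVaR, hFv]

lemma measure_gt_VaR (hZ : Measurable Z) (hc : Continuous (cdf' μ Z))
    (hs : StrictMono (cdf' μ Z)) {p : ℝ} (hp : p ∈ Set.Ioo (0:ℝ) 1) :
    (μ {ω | VaR μ Z p < Z ω}).toReal = 1 - p := by
  have hF := cdf'_VaR μ Z hZ hc hs hp
  set v := VaR μ Z p
  have hset : {ω | v < Z ω} = {ω | Z ω ≤ v}ᶜ := by ext ω; simp [not_le]
  have hmeas : MeasurableSet {ω | Z ω ≤ v} := hZ measurableSet_Iic
  rw [hset, measure_compl hmeas (measure_ne_top μ _), measure_univ]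
  rw [ENNReal.toReal_sub_of_le (prob_le_one) (by simp), ENNReal.toReal_one]
  exact congrArg (1 - ·) hF

/-- CVaR equals the Rockafellar–Uryasev value at the VaR. -/
lemma CVaR_eq (hZ : Measurable Z) (hZi : Integrable Z μ) (hc : Continuous (cdf' μ Z))
    (hs : StrictMono (cdf' μ Z)) {p : ℝ} (hp : p ∈ Set.Ioo (0:ℝ) 1) :
    CVaR μ Z p = VaR μ Z p + (∫ ω, max (Z ω - VaR μ Z p) 0 ∂μ) / (1 - p) := by
  set v := VaR μ Z p with hv
  have hm := measure_gt_VaR μ Z hZ hc hs hp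
  have hsmeas : MeasurableSet {ω | v < Z ω} := hZ measurableSet_Ioi
  have h1p : (0:ℝ) < 1 - p := by linarith [hp.2]
  have hImax : Integrable (fun ω => max (Z ω - v) 0) μ := by
    have := (hZi.sub (integrable_const v)).sup (integrable_const 0)
    simpa [Pi.sup_def] using this
  -- ∫ max = ∫ over {v<Z} of (Z - v)
  have hsplit : ∫ ω, max (Z ω - v) 0 ∂μ = ∫ ω in {ω | v < Z ω}, (Z ω - v) ∂μ := by
    rw [← integral_add_compl hsmeas hImax]
    have h1 : ∫ ω in {ω | v < Z ω}, max (Z ω - v) 0 ∂μ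
        = ∫ ω in {ω | v < Z ω}, (Z ω - v) ∂μ := by
      apply setIntegral_congr_fun hsmeas
      intro ω hω
      simp only [mem_setOf_eq] at hω
      simp [max_eq_left, sub_nonneg, hω.le]
    have h2 : ∫ ω in {ω | v < Z ω}ᶜ, max (Z ω - v) 0 ∂μ = 0 := by
      rw [setIntegral_congr_fun hsmeas.compl (g := fun _ => (0:ℝ))]
      · simp
      · intro ω hω
        simp only [mem_compl_iff, mem_setOf_eq, not_lt] at hω
        simp [max_eq_right, sub_nonpos, hω]
    rw [h1, h2, add_zero]
  have hint : ∫ ω in {ω | v < Z ω}, (Z ω - v) ∂μ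
      = (∫ ω in {ω | v < Z ω}, Z ω ∂μ) - v * (1 - p) := by
    rw [integral_sub (hZi.restrict) (integrable_const v), setIntegral_const, measureReal_def, hm, smul_eq_mul,
      mul_comm]
  rw [CVaR, hv.symm] at *
  rw [hsplit, hint, hm]
  field_simp
  ring

/-- the RU-inequality : for any d, the RU objective dominates CVaR. -/
lemma RU_ineq (hZ : Measurable Z) (hZi : Integrable Z μ)
    {p v : ℝ} (h1p : (0:ℝ) < 1 - p) (hm : (μ {ω | v < Z ω}).toReal = 1 - p) (d : ℝ) :
    v + (∫ ω, max (Z ω - v) 0 ∂μ) / (1 - p)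
      ≤ d + (∫ ω, max (Z ω - d) 0 ∂μ) / (1 - p) := by
  have hsmeas : MeasurableSet {ω | v < Z ω} := hZ measurableSet_Ioi
  have hImax : ∀ c : ℝ, Integrable (fun ω => max (Z ω - c) 0) μ := by
    intro c
    have := (hZi.sub (integrable_const c)).sup (integrable_const 0)
    simpa [Pi.sup_def] using this
  -- pointwise : max (Z-d) 0 ≥ max (Z-v) 0 + (v-d) * indicator {v<Z}
  have hpt : ∀ ω, max (Z ω - v) 0 + (v - d) * Set.indicator {ω | v < Z ω} (fun _ => (1:ℝ)) ω
      ≤ max (Z ω - d) 0 := by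
    intro ω
    by_cases hω : ω ∈ {ω | v < Z ω}
    · rw [Set.indicator_of_mem hω]
      have hω' : v < Z ω := hω
      have : max (Z ω - v) 0 = Z ω - v := max_eq_left (by linarith)
      rw [this, mul_one]
      have : Z ω - d ≤ max (Z ω - d) 0 := le_max_left _ _
      linarith
    · rw [Set.indicator_of_notMem hω, mul_zero, add_zero]
      have : max (Z ω - v) 0 = 0 := max_eq_right (by simp only [mem_setOf_eq, not_lt] at hω; linarith)
      rw [this]
      exact le_max_right _ _
  have hIind : Integrable (fun ω => (v - d) * Set.indicator {ω | v < Z ω} (fun _ => (1:ℝ)) ω) μ := by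
    apply Integrable.const_mul
    exact (integrable_const (1:ℝ)).indicator hsmeas
  have hineq : ∫ ω, (max (Z ω - v) 0 + (v - d) * Set.indicator {ω | v < Z ω} (fun _ => (1:ℝ)) ω) ∂μ
      ≤ ∫ ω, max (Z ω - d) 0 ∂μ :=
    integral_mono ((hImax v).add hIind) (hImax d) hpt
  rw [integral_add (hImax v) hIind, integral_const_mul, integral_indicator hsmeas] at hineq
  simp only [setIntegral_const, measureReal_def, smul_eq_mul, mul_one, hm] at hineq
  have h3 : (∫ ω, max (Z ω - v) 0 ∂μ - ∫ ω, max (Z ω - d) 0 ∂μ) / (1 - p) ≤ d - v := by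
    rw [div_le_iff₀ h1p]
    nlinarith [hineq]
  rw [sub_div] at h3
  linarith
end aux

theorem cvar_monotone_of_convex_order {Ω : Type*} [MeasurableSpace Ω]
    (μ : Measure Ω) [IsProbabilityMeasure μ]
    (X Y : Ω → ℝ) (hXm : Measurable X) (hYm : Measurable Y)
    (hXi : Integrable X μ) (hYi : Integrable Y μ)
    (hXc : Continuous (cdf' μ X)) (hXs : StrictMono (cdf' μ X))
    (hYc : Continuous (cdf' μ Y)) (hYs : StrictMono (cdf' μ Y))
    (hmean : ∫ ω, X ω ∂μ = ∫ ω, Y ω ∂μ)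
    (hcx : ∀ d : ℝ, ∫ ω, max (X ω - d) 0 ∂μ ≤ ∫ ω, max (Y ω - d) 0 ∂μ) :
    ∀ p ∈ Set.Ioo (0:ℝ) 1, CVaR μ X p ≤ CVaR μ Y p := by
  intro p hp
  have h1p : (0:ℝ) < 1 - p := by linarith [hp.2]
  rw [CVaR_eq μ X hXm hXi hXc hXs hp, CVaR_eq μ Y hYm hYi hYc hYs hp]
  calc VaR μ X p + (∫ ω, max (X ω - VaR μ X p) 0 ∂μ) / (1 - p)
      ≤ VaR μ Y p + (∫ ω, max (X ω - VaR μ Y p) 0 ∂μ) / (1 - p) :=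
        RU_ineq μ X hXm hXi h1p (measure_gt_VaR μ X hXm hXc hXs hp) (VaR μ Y p)
    _ ≤ VaR μ Y p + (∫ ω, max (Y ω - VaR μ Y p) 0 ∂μ) / (1 - p) := by
        have := div_le_div_of_nonneg_right (hcx (VaR μ Y p)) h1p.le
        linarith
end
end
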